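/- The contour power integrals satisfy the recursion J_{m+1}(l, a) = (i/(2a(m+3)))·( l·J_m(l, a) + (m/(m+2))·J_{m−1}(l, a) ) for all m ≥ 0, with the convention J_{−1} = 0. -/

import Mathlib

open MeasureTheory Real Complex

/-- The contour power integral `J_m(l,a)`. -/
noncomputable def J (m : ℕ) (l a : ℝ) : ℂ :=
  (Complex.exp (Complex.I * Real.pi * ((m:ℂ) - 1) / 4) / (2 * Real.pi * ((m+2).factorial : ℝ))) *
    ∫ ρ : ℝ, Complex.exp ((ρ:ℂ) * l * Complex.exp (Complex.I * Real.pi / 4) - a * ρ^2) * (ρ:ℂ)^m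

/-!
For the Gaussian moments `M k = ∫ exp(ρc - aρ²) ρ^k dρ`, integrating the derivative of
`exp(ρc - aρ²) ρ^k` over `ℝ` gives `2a M (k+1) = c M k + k M (k-1)`. With `c = l e^{iπ/4}`,
`J m` is `M m` times a prefactor `P m` with `(m+3) P (m+1) = e^{iπ/4} P m`, and `(e^{iπ/4})² = i`
turns the moment recursion into the recursion for `J`.
-/

open scoped Nat

lemma abs_pow_mul_exp_neg_mul_sq_le {b : ℝ} (hb : 0 < b) (k : ℕ) (x : ℝ) :
    |x| ^ k * rexp (-(b * x ^ 2)) ≤ √(k ! / (2 * b) ^ k) := by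
  rw [Real.le_sqrt (by positivity) (by positivity)]
  set t := 2 * b * x ^ 2
  have ht : t ^ k * rexp (-t) ≤ k ! := by
    have := Real.pow_div_factorial_le_exp (x := t) (by positivity) k
    rw [Real.exp_neg, ← div_eq_mul_inv, div_le_iff₀ (by positivity)]
    rwa [div_le_iff₀ (by positivity), mul_comm] at this
  calc (|x| ^ k * rexp (-(b * x ^ 2))) ^ 2 = t ^ k * rexp (-t) / (2 * b) ^ k := by
        rw [mul_pow, ← pow_mul, mul_comm k, pow_mul, sq_abs, ← Real.exp_nat_mul, mul_pow]
        field_simp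
        simp only [t]
        ring_nf
    _ ≤ k ! / (2 * b) ^ k := by gcongr

lemma integrable_cexp_mul_sub_mul_sq_mul_pow {a : ℂ} (ha : 0 < a.re) (c : ℂ) (k : ℕ) :
    Integrable fun ρ : ℝ ↦ cexp (ρ * c - a * ρ ^ 2) * (ρ : ℂ) ^ k := by
  have hdecomp : (fun ρ : ℝ ↦ cexp (ρ * c - a * ρ ^ 2) * (ρ : ℂ) ^ k) = fun ρ : ℝ ↦
      ((ρ ^ k * rexp (-(a.re / 2 * ρ ^ 2)) : ℝ) : ℂ) *
        cexp ((a.re / 2 - a) * ρ ^ 2 + c * ρ + 0) := by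
    ext ρ
    push_cast
    rw [mul_assoc, ← Complex.exp_add, mul_comm]
    ring_nf
  rw [hdecomp]
  have hre : ((a.re : ℂ) / 2 - a).re < 0 := by
    simp only [sub_re, div_ofNat_re, ofReal_re]
    linarith
  refine (integrable_cexp_quadratic' hre c 0).bdd_mul
    (c := √(k ! / (2 * (a.re / 2)) ^ k)) (by fun_prop) (ae_of_all _ fun ρ ↦ ?_)
  rw [Complex.norm_real, Real.norm_eq_abs, abs_mul, abs_pow, abs_of_pos (Real.exp_pos _)]
  exact abs_pow_mul_exp_neg_mul_sq_le (half_pos ha) k ρ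

noncomputable def gaussianMoment (a c : ℂ) (k : ℕ) : ℂ :=
  ∫ ρ : ℝ, cexp (ρ * c - a * ρ ^ 2) * (ρ : ℂ) ^ k

lemma hasDerivAt_cexp_mul_sub_mul_sq (a c : ℂ) (ρ : ℝ) :
    HasDerivAt (fun ρ : ℝ ↦ cexp (ρ * c - a * ρ ^ 2))
      (cexp (ρ * c - a * ρ ^ 2) * (c - 2 * a * ρ)) ρ := by
  have h : HasDerivAt (fun z : ℂ ↦ z * c - a * z ^ 2) (c - 2 * a * ρ) ρ := by
    refine (((hasDerivAt_id (ρ : ℂ)).mul_const c).sub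
      ((hasDerivAt_pow 2 (ρ : ℂ)).const_mul a)).congr_deriv ?_
    norm_num
    ring
  exact h.comp_ofReal.cexp

-- At `k = 0` the truncated `k - 1` is harmless: its term carries the factor `k`.
lemma two_mul_gaussianMoment_succ {a : ℂ} (ha : 0 < a.re) (c : ℂ) (k : ℕ) :
    2 * a * gaussianMoment a c (k + 1)
      = c * gaussianMoment a c k + k * gaussianMoment a c (k - 1) := by
  set e : ℝ → ℂ := fun ρ ↦ cexp (ρ * c - a * ρ ^ 2)
  have hint (j : ℕ) : Integrable fun ρ : ℝ ↦ e ρ * (ρ : ℂ) ^ j :=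
    integrable_cexp_mul_sub_mul_sq_mul_pow ha c j
  have hderiv (ρ : ℝ) : HasDerivAt (fun ρ : ℝ ↦ e ρ * (ρ : ℂ) ^ k)
      (c * (e ρ * (ρ : ℂ) ^ k) - 2 * a * (e ρ * (ρ : ℂ) ^ (k + 1))
        + k * (e ρ * (ρ : ℂ) ^ (k - 1))) ρ := by
    refine ((hasDerivAt_cexp_mul_sub_mul_sq a c ρ).mul
      ((hasDerivAt_pow k (ρ : ℂ)).comp_ofReal)).congr_deriv ?_
    simp only [e, pow_succ]
    ring
  have hI (j : ℕ) (b : ℂ) : Integrable fun ρ : ℝ ↦ b * (e ρ * (ρ : ℂ) ^ j) :=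
    (hint j).const_mul b
  have hzero := integral_eq_zero_of_hasDerivAt_of_integrable hderiv
    (((hI k c).sub (hI (k + 1) _)).add (hI (k - 1) _)) (hint k)
  rw [integral_add ?_ (hI (k - 1) _), integral_sub (hI k c) (hI (k + 1) _),
    integral_const_mul, integral_const_mul, integral_const_mul] at hzero
  swap
  · exact (hI k c).sub (hI (k + 1) _)
  simp only [gaussianMoment]
  linear_combination -hzero

noncomputable def jPrefactor (m : ℕ) : ℂ :=
  cexp (I * π * ((m : ℂ) - 1) / 4) / (2 * π * ((m + 2)! : ℝ))

lemma J_eq_jPrefactor_mul_gaussianMoment (m : ℕ) (l a : ℝ) :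
    J m l a = jPrefactor m * gaussianMoment a (l * cexp (I * π / 4)) m := by
  simp only [J, jPrefactor, gaussianMoment, mul_assoc]

lemma jPrefactor_succ (m : ℕ) :
    (m + 3) * jPrefactor (m + 1) = cexp (I * π / 4) * jPrefactor m := by
  have hfac : (((m + 1 + 2)! : ℝ) : ℂ) = (m + 3) * ((m + 2)! : ℝ) := by
    rw [Nat.factorial_succ]
    push_cast
    ring
  have hexp : cexp (I * π * (((m + 1 : ℕ) : ℂ) - 1) / 4)
      = cexp (I * π / 4) * cexp (I * π * ((m : ℂ) - 1) / 4) := by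
    rw [← Complex.exp_add]
    push_cast
    ring_nf
  have hm : (m : ℂ) + 3 ≠ 0 := by norm_cast
  simp only [jPrefactor, hfac, hexp]
  field_simp

lemma cexp_I_pi_div_four_sq : cexp (I * π / 4) ^ 2 = I := by
  rw [sq, ← Complex.exp_add]
  convert exp_pi_div_two_mul_I using 2
  ring

theorem J_recursion (l a : ℝ) (ha : 0 < a) (m : ℕ) :
    J (m+1) l a
      = (Complex.I / (2 * a * ((m:ℂ) + 3))) *
          ((l:ℂ) * J m l a
            + ((m:ℂ) / ((m:ℂ) + 2)) * (if m = 0 then 0 else J (m-1) l a)) := by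
  simp only [J_eq_jPrefactor_mul_gaussianMoment]
  set ω := cexp (I * π / 4)
  set M := gaussianMoment a (l * ω)
  have hrec : 2 * a * M (m + 1) = l * ω * M m + m * M (m - 1) :=
    two_mul_gaussianMoment_succ (by simpa using ha) _ m
  have hP := jPrefactor_succ m
  have hω := cexp_I_pi_div_four_sq
  have ha' : (a : ℂ) ≠ 0 := by exact_mod_cast ha.ne'
  have hm2 : (m : ℂ) + 2 ≠ 0 := by norm_cast
  have hm3 : (m : ℂ) + 3 ≠ 0 := by norm_cast
  rcases m with _ | n
  · simp only [if_pos, Nat.cast_zero, zero_mul, add_zero] at hrec hP ⊢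
    field_simp
    linear_combination (2 * 2 * a * M 1) * hP + (2 * ω * jPrefactor 0) * hrec
      + (2 * l * jPrefactor 0 * M 0) * hω
  · have hP' := jPrefactor_succ n
    simp only [if_neg (Nat.succ_ne_zero n), Nat.add_sub_cancel] at hrec ⊢
    push_cast at hrec hP hP' hm2 hm3 ⊢
    field_simp
    linear_combination (2 * a * M (n + 1 + 1) * (n + 1 + 2)) * hP
      + (ω * jPrefactor (n + 1) * (n + 1 + 2)) * hrec + ((n + 1) * ω * M n) * hP'
      + (l * jPrefactor (n + 1) * M (n + 1) * (n + 1 + 2) + (n + 1) * jPrefactor n * M n) * hω
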